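/- Let π, σ : U → {1,…,n} be bijections on a finite set U of size n ≥ 1. Then LR(π,σ) = Σ_{i=1}^{n−1} d_i(π,σ), i.e., the LR-distance equals the sum over all cuts i ∈ {1,…,n−1} of the cut counts d_i(π,σ). -/
import Mathlib


/-- The LR-distance between two rankings `π, σ : U → ℕ`, restricted to the
rank interval `[a, b]`. -/
def LRint {U : Type*} [Fintype U] (π σ : U → ℕ) (a b : ℕ) : ℕ :=
  if h : b ≤ a then 0
  else
    (Finset.univ.filter (fun e => π e ≤ (a + b) / 2 ∧ (a + b) / 2 < σ e)).card +
    (Finset.univ.filter (fun e => (a + b) / 2 < π e ∧ σ e ≤ (a + b) / 2)).card +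
    LRint π σ a ((a + b) / 2) + LRint π σ ((a + b) / 2 + 1) b
termination_by b - a
decreasing_by
  all_goals omega

/-- The LR-distance between two complete rankings of size `n`. -/
def LRdist {U : Type*} [Fintype U] (π σ : U → ℕ) (n : ℕ) : ℕ :=
  LRint π σ 1 n

/-- The cut count `d_i(π,σ) = |{e : π(e) ≤ i < σ(e)}| + |{e : σ(e) ≤ i < π(e)}|`. -/
def cutCount {U : Type*} [Fintype U] (π σ : U → ℕ) (i : ℕ) : ℕ :=
  (Finset.univ.filter (fun e => π e ≤ i ∧ i < σ e)).card +
  (Finset.univ.filter (fun e => σ e ≤ i ∧ i < π e)).card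

lemma LRint_eq_sum {U : Type*} [Fintype U] (π σ : U → ℕ) :
    ∀ a b : ℕ, LRint π σ a b = ∑ i ∈ Finset.Ico a b, cutCount π σ i := by
  suffices h : ∀ k a b : ℕ, b - a = k →
      LRint π σ a b = ∑ i ∈ Finset.Ico a b, cutCount π σ i by
    exact fun a b => h _ a b rfl
  intro k
  induction k using Nat.strong_induction_on with
  | _ k ih =>
    intro a b hk
    rw [LRint]
    by_cases h : b ≤ a
    · rw [dif_pos h, Finset.Ico_eq_empty (by omega), Finset.sum_empty]
    · rw [dif_neg h]
      set m := (a + b) / 2 with hm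
      have ham : a ≤ m := by omega
      have hmb : m < b := by omega
      rw [ih (m - a) (by omega) a m rfl, ih (b - (m + 1)) (by omega) (m + 1) b rfl]
      rw [← Finset.sum_Ico_consecutive _ (show a ≤ m + 1 by omega) (show m + 1 ≤ b by omega),
        Finset.sum_Ico_succ_top ham]
      have hswap : (Finset.univ.filter (fun e : U => m < π e ∧ σ e ≤ m)) =
          (Finset.univ.filter (fun e : U => σ e ≤ m ∧ m < π e)) := by
        simp [and_comm]
      unfold cutCount
      rw [hswap]
      ring

/-- For bijections `π, σ : U → {1,…,n}` with `n ≥ 1`, the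
LR-distance equals the sum over all cuts `i ∈ {1,…,n−1}` of the cut counts. -/
theorem lrdist_eq_sum_cutCount {U : Type*} [Fintype U] {n : ℕ}
    (hU : Fintype.card U = n) (hn : 1 ≤ n)
    (π σ : U → ℕ)
    (hπinj : Function.Injective π) (hπmem : ∀ e, π e ∈ Finset.Icc 1 n)
    (hσinj : Function.Injective σ) (hσmem : ∀ e, σ e ∈ Finset.Icc 1 n) :
    LRdist π σ n = ∑ i ∈ Finset.Ico 1 n, cutCount π σ i := by
  exact LRint_eq_sum π σ 1 n
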